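/- Polynomials f₁,…,fₙ ∈ k[x₁,…,xₙ], with k of characteristic zero, are algebraically independent over k if their Jacobian determinant J(f₁,…,fₙ) = det(∂fᵢ/∂xⱼ) is nonzero. -/

import Mathlib

/-!
If `P(f₁, …, fₙ) = 0`, differentiating with the chain rule shows that the row vector
`(∂P/∂yᵢ (f))ᵢ` is killed by the Jacobian matrix, so nonzero Jacobian determinant forces
every `∂P/∂yᵢ` to be another relation among the `fᵢ`, of smaller total degree. By induction on the
total degree all `∂P/∂yᵢ` vanish, so in characteristic zero `P` is a constant, which is zero
because it is itself a relation.
-/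

open Finsupp Matrix

namespace MvPolynomial

variable {R σ τ : Type*}

section CommSemiring

variable [CommSemiring R]

theorem totalDegree_pderiv_lt {p : MvPolynomial σ R} {i : σ} (h : pderiv i p ≠ 0) :
    (pderiv i p).totalDegree < p.totalDegree := by
  obtain ⟨m, hm, hmax⟩ :=
    Finset.exists_mem_eq_sup _ (support_nonempty.2 h) fun s : σ →₀ ℕ => s.sum fun _ e => e
  have hm' : m + single i 1 ∈ p.support := by
    rw [mem_support_iff, coeff_pderiv] at hm
    exact mem_support_iff.2 (left_ne_zero_of_mul hm)
  calc (pderiv i p).totalDegree = m.sum fun _ e => e := hmax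
    _ < (m + single i 1).sum fun _ e => e := by
      rw [sum_add_index' (fun _ => rfl) (fun _ _ _ => rfl), sum_single_index rfl]
      exact Nat.lt_succ_self _
    _ ≤ p.totalDegree := le_totalDegree hm'

theorem pderiv_ne_zero_of_mem_vars [IsAddTorsionFree R] {p : MvPolynomial σ R} {i : σ}
    (h : i ∈ p.vars) : pderiv i p ≠ 0 := by
  obtain ⟨m, hm, hi⟩ := (mem_vars_iff_mem_support i).1 h
  have hmi : m i ≠ 0 := Finsupp.mem_support_iff.1 hi
  intro h0
  have hcoeff := coeff_pderiv (i := i) p (m - single i 1)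
  rw [h0, coeff_zero, sub_add_single_one_cancel hmi, eq_comm, mul_comm, ← Nat.cast_succ,
    ← nsmul_eq_mul, nsmul_eq_zero_iff_right (Nat.succ_ne_zero _)] at hcoeff
  exact mem_support_iff.1 hm hcoeff

theorem eq_C_of_forall_pderiv_eq_zero [IsAddTorsionFree R] {p : MvPolynomial σ R}
    (h : ∀ i, pderiv i p = 0) : p = C (p.coeff 0) :=
  (vars_eq_empty_iff_eq_C).1 <| Finset.eq_empty_of_forall_notMem fun i hi =>
    pderiv_ne_zero_of_mem_vars hi (h i)

theorem pderiv_aeval [Fintype σ] (f : σ → MvPolynomial τ R) (p : MvPolynomial σ R) (j : τ) :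
    pderiv j (aeval f p) = ∑ i, aeval f (pderiv i p) * pderiv j (f i) := by
  classical
  induction p using MvPolynomial.induction_on with
  | C a => simp
  | add p q hp hq => simp only [map_add, hp, hq, add_mul, Finset.sum_add_distrib]
  | mul_X p i hp =>
    rw [map_mul, aeval_X, pderiv_mul, hp]
    simp only [pderiv_mul, pderiv_X, map_add, map_mul, aeval_X, add_mul, Finset.sum_add_distrib,
      Finset.sum_mul, Pi.single_apply, mul_ite, apply_ite (aeval f), ite_mul, map_zero, mul_one,
      mul_zero, zero_mul, Finset.sum_ite_eq, Finset.mem_univ, if_true, mul_right_comm]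

end CommSemiring

section CommRing

variable [CommRing R] [NoZeroDivisors R] [Fintype σ] [DecidableEq σ]

noncomputable def jacobian (f : σ → MvPolynomial σ R) : Matrix σ σ (MvPolynomial σ R) :=
  .of fun i j => pderiv j (f i)

theorem aeval_pderiv_eq_zero_of_det_jacobian_ne_zero {f : σ → MvPolynomial σ R}
    (hJ : (jacobian f).det ≠ 0) {p : MvPolynomial σ R} (hp : aeval f p = 0) (i : σ) :
    aeval f (pderiv i p) = 0 := by
  have hker : (fun i => aeval f (pderiv i p)) ᵥ* jacobian f = 0 := by
    funext j
    have hj := congrArg (pderiv j) hp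
    rw [pderiv_aeval, map_zero] at hj
    simpa [Matrix.vecMul, dotProduct, jacobian] using hj
  exact congrFun (Matrix.eq_zero_of_vecMul_eq_zero hJ hker) i

theorem algebraicIndependent_of_det_jacobian_ne_zero [IsAddTorsionFree R]
    {f : σ → MvPolynomial σ R} (hJ : (jacobian f).det ≠ 0) : AlgebraicIndependent R f := by
  refine algebraicIndependent_iff.2 fun p hp => ?_
  induction hd : p.totalDegree using Nat.strong_induction_on generalizing p with
  | _ d ih =>
    have hpderiv (i : σ) : pderiv i p = 0 := by
      by_contra hne
      exact hne <| ih _ (hd ▸ totalDegree_pderiv_lt hne) _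
        (aeval_pderiv_eq_zero_of_det_jacobian_ne_zero hJ hp i) rfl
    rw [eq_C_of_forall_pderiv_eq_zero hpderiv, aeval_C, algebraMap_eq, C_eq_zero] at hp
    rw [eq_C_of_forall_pderiv_eq_zero hpderiv, hp, C_0]

end CommRing

end MvPolynomial

theorem jacobian_criterion (k : Type*) [Field k] [CharZero k] (n : ℕ)
    (f : Fin n → MvPolynomial (Fin n) k)
    (hJ : Matrix.det (fun i j : Fin n => MvPolynomial.pderiv j (f i)) ≠ 0) :
    AlgebraicIndependent k f :=
  MvPolynomial.algebraicIndependent_of_det_jacobian_ne_zero hJ
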